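/- Let ⟨P, ⊴⟩ be a partial order PR and C a ⊴-maximal partition refiner. If B is a block witnessing that C is a partition refiner (B ∩ pre(μ𝒫(C)) ≠ ∅ and B ⊄ pre(μ𝒫(C))), then for every block C' with C ⊲ C', B not→∃ C'. -/

import Mathlib

/-- `P` is a partition of the whole state space. -/
def IsPartition {α : Type*} (P : Set (Set α)) : Prop :=
  (∀ B ∈ P, B.Nonempty) ∧ (∀ x : α, ∃! B, B ∈ P ∧ x ∈ B)

/-- `pre(T) = {s | ∃ t ∈ T, s → t}`. -/
def preR {α : Type*} (tr : α → α → Prop) (T : Set α) : Set α :=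
  {s | ∃ t ∈ T, tr s t}

/-- `S₁ →∃ S₂` iff some state of `S₁` has a transition into `S₂`. -/
def exE {α : Type*} (tr : α → α → Prop) (S T : Set α) : Prop :=
  ∃ s ∈ S, ∃ t ∈ T, tr s t

/-- `μ𝒫(C) = ⋃ {E ∈ P | C ⊴ E}` for a block `C` of `P`. -/
def muBlk {α : Type*} (P : Set (Set α)) (ord : Set α → Set α → Prop)
    (C : Set α) : Set α :=
  ⋃₀ {E | E ∈ P ∧ ord C E}

/-- `C` is a partition refiner for `⟨P,⊴⟩`. -/
def IsPRefiner {α : Type*} (tr : α → α → Prop) (P : Set (Set α))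
    (ord : Set α → Set α → Prop) (C : Set α) : Prop :=
  C ∈ P ∧ ∃ B ∈ P, (B ∩ preR tr (muBlk P ord C)).Nonempty ∧
    (B \ preR tr (muBlk P ord C)).Nonempty

/-! A block `B` with a transition into `C'` meets `pre(μ𝒫(C'))`. If `C ⊲ C'`, maximality of `C`
says `C'` is not a refiner, so `B` lies entirely in `pre(μ𝒫(C'))`, which is contained in
`pre(μ𝒫(C))` because `μ𝒫` is antitone. That contradicts `B ⊄ pre(μ𝒫(C))`. -/

theorem preR_mono {α : Type*} (tr : α → α → Prop) {T T' : Set α} (h : T ⊆ T') :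
    preR tr T ⊆ preR tr T' :=
  fun _ ⟨t, ht, hst⟩ => ⟨t, h ht, hst⟩

theorem exE_iff_inter_preR_nonempty {α : Type*} (tr : α → α → Prop) (S T : Set α) :
    exE tr S T ↔ (S ∩ preR tr T).Nonempty :=
  ⟨fun ⟨s, hs, t, ht, hst⟩ => ⟨s, hs, t, ht, hst⟩, fun ⟨s, hs, t, ht, hst⟩ => ⟨s, hs, t, ht, hst⟩⟩

section Blocks

variable {α : Type*} {P : Set (Set α)} {ord : Set α → Set α → Prop}

theorem subset_muBlk_self {C : Set α} (hC : C ∈ P) (hCC : ord C C) : C ⊆ muBlk P ord C :=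
  Set.subset_sUnion_of_mem ⟨hC, hCC⟩

theorem muBlk_anti (htrans : ∀ B ∈ P, ∀ C ∈ P, ∀ D ∈ P, ord B C → ord C D → ord B D)
    {C C' : Set α} (hC : C ∈ P) (hC' : C' ∈ P) (hord : ord C C') :
    muBlk P ord C' ⊆ muBlk P ord C :=
  Set.sUnion_mono fun E ⟨hE, hC'E⟩ => ⟨hE, htrans C hC C' hC' E hE hord hC'E⟩

theorem subset_preR_muBlk_of_not_isPRefiner (tr : α → α → Prop) {B C : Set α}
    (hB : B ∈ P) (hC : C ∈ P) (hnot : ¬ IsPRefiner tr P ord C)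
    (hmeet : (B ∩ preR tr (muBlk P ord C)).Nonempty) :
    B ⊆ preR tr (muBlk P ord C) := by
  by_contra hsub
  exact hnot ⟨hC, B, hB, hmeet, Set.sdiff_nonempty.mpr hsub⟩

end Blocks

theorem stmt10_general {α : Type*} (tr : α → α → Prop)
    (P : Set (Set α))
    (ord : Set α → Set α → Prop)
    (hrefl : ∀ B ∈ P, ord B B)
    (htrans : ∀ B ∈ P, ∀ C ∈ P, ∀ D ∈ P, ord B C → ord C D → ord B D)
    (C : Set α) (hC : IsPRefiner tr P ord C)
    (hmax : ∀ C' ∈ P, IsPRefiner tr P ord C' → ord C C' → C' = C)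
    (B : Set α) (hB : B ∈ P)
    (hB2 : ¬ B ⊆ preR tr (muBlk P ord C)) :
    ∀ C' ∈ P, ord C C' → C ≠ C' → ¬ exE tr B C' := by
  intro C' hC' hord hne hex
  have hnot : ¬ IsPRefiner tr P ord C' := fun h => hne (hmax C' hC' h hord).symm
  have hmeet : (B ∩ preR tr (muBlk P ord C')).Nonempty :=
    ((exE_iff_inter_preR_nonempty tr B C').mp hex).mono <|
      Set.inter_subset_inter_right B <| preR_mono tr <| subset_muBlk_self hC' (hrefl C' hC')
  exact hB2 <| (subset_preR_muBlk_of_not_isPRefiner tr hB hC' hnot hmeet).trans <|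
    preR_mono tr <| muBlk_anti htrans hC.1 hC' hord

/-- If `C` is a `⊴`-maximal partition refiner of a partial order PR and the
block `B` witnesses that `C` is a partition refiner, then `B ¬→∃ C'` for
every block `C'` strictly above `C`. -/
theorem stmt10 {α : Type*} [Finite α] (tr : α → α → Prop)
    (P : Set (Set α)) (hP : IsPartition P)
    (ord : Set α → Set α → Prop)
    (hrefl : ∀ B ∈ P, ord B B)
    (htrans : ∀ B ∈ P, ∀ C ∈ P, ∀ D ∈ P, ord B C → ord C D → ord B D)
    (hantisym : ∀ B ∈ P, ∀ C ∈ P, ord B C → ord C B → B = C)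
    (C : Set α) (hC : IsPRefiner tr P ord C)
    (hmax : ∀ C' ∈ P, IsPRefiner tr P ord C' → ord C C' → C' = C)
    (B : Set α) (hB : B ∈ P)
    (hB1 : (B ∩ preR tr (muBlk P ord C)).Nonempty)
    (hB2 : ¬ B ⊆ preR tr (muBlk P ord C)) :
    ∀ C' ∈ P, ord C C' → C ≠ C' → ¬ exE tr B C' :=
  stmt10_general tr P ord hrefl htrans C hC hmax B hB hB2
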